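/- arXiv:1307.1120 — 2 statements merged into one kernel-verified Lean document; each statement's English description precedes it below -/
import Mathlib

section
/- The triple (G,E,φ) is pseudo-free if and only if the inverse semigroup S_{G,E} is E*-unitary (i.e., every element dominating a nonzero idempotent is itself idempotent). -/
noncomputable section

open scoped Classical

/-! ### Corona groups -/

section CoronaSec

variable (G : Type*) [Group G]

def eventuallyTrivial : Subgroup (ℕ → G) where
  carrier := {f | ∃ N, ∀ n, N ≤ n → f n = 1}
  one_mem' := ⟨0, fun n _ => rfl⟩
  mul_mem' := by
    rintro a b ⟨N, hN⟩ ⟨M, hM⟩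
    exact ⟨max N M, fun n hn => by
      simp [Pi.mul_apply, hN n (le_trans (le_max_left _ _) hn),
        hM n (le_trans (le_max_right _ _) hn)]⟩
  inv_mem' := by
    rintro a ⟨N, hN⟩
    exact ⟨N, fun n hn => by simp [Pi.inv_apply, hN n hn]⟩

instance eventuallyTrivial_normal : (eventuallyTrivial G).Normal := by
  constructor
  rintro a ⟨N, hN⟩ g
  exact ⟨N, fun n hn => by simp [Pi.mul_apply, Pi.inv_apply, hN n hn]⟩

def lshift : (ℕ → G) →* (ℕ → G) where
  toFun f := fun n => f (n + 1)
  map_one' := rfl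
  map_mul' a b := rfl

def rshift : (ℕ → G) →* (ℕ → G) where
  toFun f := fun n => if n = 0 then 1 else f (n - 1)
  map_one' := by funext n; by_cases h : n = 0 <;> simp [h]
  map_mul' a b := by funext n; by_cases h : n = 0 <;> simp [h]

lemma lshift_comap : eventuallyTrivial G ≤ (eventuallyTrivial G).comap (lshift G) := by
  rintro f ⟨N, hN⟩
  exact ⟨N, fun n hn => hN (n + 1) (by omega)⟩

lemma rshift_comap : eventuallyTrivial G ≤ (eventuallyTrivial G).comap (rshift G) := by
  rintro f ⟨N, hN⟩
  refine ⟨N + 1, fun n hn => ?_⟩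
  show (if n = 0 then 1 else f (n - 1)) = 1
  rw [if_neg (by omega)]
  exact hN (n - 1) (by omega)

abbrev Corona : Type _ := (ℕ → G) ⧸ eventuallyTrivial G

def coronaRho : Corona G →* Corona G :=
  QuotientGroup.map _ _ (rshift G) (rshift_comap G)

def coronaLam : Corona G →* Corona G :=
  QuotientGroup.map _ _ (lshift G) (lshift_comap G)

def coronaRhoZ : ℤ → Corona G → Corona G
  | Int.ofNat n => (⇑(coronaRho G))^[n]
  | Int.negSucc n => (⇑(coronaLam G))^[n + 1]

end CoronaSec

/-! ### Graphs, paths and self-similar actions -/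

structure SSGraph (V : Type*) (E : Type*) where
  r : E → V
  d : E → V

namespace SSGraph

variable {V E : Type*}

abbrev Pth (V E : Type*) := V × List E

def IsPath (Γ : SSGraph V E) (p : Pth V E) : Prop :=
  (∀ e ∈ p.2.head?, Γ.r e = p.1) ∧ p.2.Chain' fun a b => Γ.d a = Γ.r b

def src (Γ : SSGraph V E) (p : Pth V E) : V :=
  match p.2.getLast? with
  | none => p.1
  | some e => Γ.d e

def comp (p q : Pth V E) : Pth V E := (p.1, p.2 ++ q.2)

def ofVertex (v : V) : Pth V E := (v, [])

def ofEdge (Γ : SSGraph V E) (e : E) : Pth V E := (Γ.r e, [e])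

structure GraphAction (G : Type*) [Group G] (Γ : SSGraph V E) where
  actV : G → V → V
  actE : G → E → E
  actV_one : ∀ v, actV 1 v = v
  actV_mul : ∀ g h v, actV (g * h) v = actV g (actV h v)
  actE_one : ∀ e, actE 1 e = e
  actE_mul : ∀ g h e, actE (g * h) e = actE g (actE h e)
  r_act : ∀ g e, Γ.r (actE g e) = actV g (Γ.r e)
  d_act : ∀ g e, Γ.d (actE g e) = actV g (Γ.d e)

structure EdgeCocycle {G : Type*} [Group G] {Γ : SSGraph V E} (GA : GraphAction G Γ) where
  φ : G → E → G
  cocycle : ∀ g h e, φ (g * h) e = φ g (GA.actE h e) * φ h e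
  vertex_compat : ∀ g e v, GA.actV (φ g e) v = GA.actV g v

/-- The extension of a self-similar `(G,E,φ)`-datum to the set of all finite paths,
with all the properties listed in the extension proposition. -/
structure PathSystem {G : Type*} [Group G] {Γ : SSGraph V E} {GA : GraphAction G Γ}
    (c : EdgeCocycle GA) where
  act : G → Pth V E → Pth V E
  coc : G → Pth V E → G
  act_vertex : ∀ g v, act g (ofVertex v) = ofVertex (GA.actV g v)
  act_edge : ∀ g e, act g (Γ.ofEdge e) = Γ.ofEdge (GA.actE g e)
  coc_vertex : ∀ g v, coc g (ofVertex v) = g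
  coc_edge : ∀ g e, coc g (Γ.ofEdge e) = c.φ g e
  isPath_act : ∀ g p, Γ.IsPath p → Γ.IsPath (act g p)
  length_act : ∀ g p, Γ.IsPath p → (act g p).2.length = p.2.length
  ran_act : ∀ g p, Γ.IsPath p → (act g p).1 = GA.actV g p.1
  src_act : ∀ g p, Γ.IsPath p → Γ.src (act g p) = GA.actV g (Γ.src p)
  coc_vertex_act : ∀ g p v, Γ.IsPath p → GA.actV (coc g p) v = GA.actV g v
  act_one : ∀ p, Γ.IsPath p → act 1 p = p
  act_mul : ∀ g h p, Γ.IsPath p → act (g * h) p = act g (act h p)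
  coc_mul : ∀ g h p, Γ.IsPath p → coc (g * h) p = coc g (act h p) * coc h p
  act_comp : ∀ g p q, Γ.IsPath p → Γ.IsPath q → Γ.src p = q.1 →
    act g (comp p q) = comp (act g p) (act (coc g p) q)
  coc_comp : ∀ g p q, Γ.IsPath p → Γ.IsPath q → Γ.src p = q.1 →
    coc g (comp p q) = coc (coc g p) q

def PseudoFree {G : Type*} [Group G] {Γ : SSGraph V E} (GA : GraphAction G Γ)
    (c : EdgeCocycle GA) : Prop :=
  ∀ g e, GA.actE g e = e → c.φ g e = 1 → g = 1

/-! ### The inverse semigroup `S_{G,E}` -/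

def SgeCond {G : Type*} [Group G] (Γ : SSGraph V E) (GA : GraphAction G Γ)
    (t : Pth V E × G × Pth V E) : Prop :=
  Γ.IsPath t.1 ∧ Γ.IsPath t.2.2 ∧ Γ.src t.1 = GA.actV t.2.1 (Γ.src t.2.2)

def sgeSet {G : Type*} [Group G] (Γ : SSGraph V E) (GA : GraphAction G Γ) :
    Set (Option (Pth V E × G × Pth V E)) :=
  {x | x = none ∨ ∃ t, x = some t ∧ SgeCond Γ GA t}

def sgeMulAux {G : Type*} [Group G] {Γ : SSGraph V E} {GA : GraphAction G Γ}
    {c : EdgeCocycle GA} (S : PathSystem c) :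
    Pth V E × G × Pth V E → Pth V E × G × Pth V E → Option (Pth V E × G × Pth V E) :=
  fun x y =>
    if x.2.2.1 = y.1.1 ∧ x.2.2.2 <+: y.1.2 then
      let ε : Pth V E := (Γ.src x.2.2, y.1.2.drop x.2.2.2.length)
      some (comp x.1 (S.act x.2.1 ε), S.coc x.2.1 ε * y.2.1, y.2.2)
    else if y.1.1 = x.2.2.1 ∧ y.1.2 <+: x.2.2.2 then
      let ε : Pth V E := (Γ.src y.1, x.2.2.2.drop y.1.2.length)
      some (x.1, x.2.1 * (S.coc y.2.1⁻¹ ε)⁻¹, comp y.2.2 (S.act y.2.1⁻¹ ε))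
    else none

def sgeMul {G : Type*} [Group G] {Γ : SSGraph V E} {GA : GraphAction G Γ}
    {c : EdgeCocycle GA} (S : PathSystem c) :
    Option (Pth V E × G × Pth V E) → Option (Pth V E × G × Pth V E) →
      Option (Pth V E × G × Pth V E)
  | some x, some y => sgeMulAux S x y
  | _, _ => none

def sgeStar {G : Type*} [Group G] :
    Option (Pth V E × G × Pth V E) → Option (Pth V E × G × Pth V E)
  | none => none
  | some t => some (t.2.2, t.2.1⁻¹, t.1)

/-! ### Infinite paths -/

def InfPath (Γ : SSGraph V E) (ξ : ℕ → E) : Prop :=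
  ∀ n, Γ.d (ξ n) = Γ.r (ξ (n + 1))

/-- Truncation of an infinite path: the finite path formed by its first `n` edges.
(Index `n` of the sequence is the `(n+1)`-st edge of the path.) -/
def trunc (Γ : SSGraph V E) (ξ : ℕ → E) (n : ℕ) : Pth V E :=
  (Γ.r (ξ 0), (List.range n).map ξ)

/-- Concatenation `αξ` of a finite path with an infinite path. -/
def compInf (α : Pth V E) (ξ : ℕ → E) : ℕ → E :=
  fun n => α.2.getD n (ξ (n - α.2.length))

/-- `Phi S g ξ n = φ(g, ξ|_n)`, i.e. the entry of the sequence `Φ(g,ξ) ∈ G^∞` at the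
`(n+1)`-st position in the 1-based indexing of the paper. -/
def Phi {G : Type*} [Group G] {Γ : SSGraph V E} {GA : GraphAction G Γ}
    {c : EdgeCocycle GA} (S : PathSystem c) (g : G) (ξ : ℕ → E) : ℕ → G :=
  fun n => S.coc g (Γ.trunc ξ n)

/-- The extension of the self-similar action to infinite paths. -/
structure InfAction {G : Type*} [Group G] {Γ : SSGraph V E} {GA : GraphAction G Γ}
    {c : EdgeCocycle GA} (S : PathSystem c) where
  a : G → (ℕ → E) → (ℕ → E)
  isInf : ∀ g ξ, Γ.InfPath ξ → Γ.InfPath (a g ξ)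
  a_one : ∀ ξ, Γ.InfPath ξ → a 1 ξ = ξ
  a_mul : ∀ g h ξ, Γ.InfPath ξ → a (g * h) ξ = a g (a h ξ)
  trunc_a : ∀ g ξ n, Γ.InfPath ξ → Γ.trunc (a g ξ) n = S.act g (Γ.trunc ξ n)

/-- `η` belongs to the cylinder `Z(β)`. -/
def InCyl (Γ : SSGraph V E) (β : Pth V E) (η : ℕ → E) : Prop :=
  Γ.r (η 0) = β.1 ∧ ∀ n (hn : n < β.2.length), η n = β.2[n]'hn

/-- Equality of germs `[α₁,g₁,β₁; η₁] = [α₂,g₂,β₂; η₂]` for the action of `S_{G,E}`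
on the infinite path space. -/
def germEqv {G : Type*} [Group G] {Γ : SSGraph V E} {GA : GraphAction G Γ}
    {c : EdgeCocycle GA} (S : PathSystem c)
    (α₁ : Pth V E) (g₁ : G) (β₁ : Pth V E) (η₁ : ℕ → E)
    (α₂ : Pth V E) (g₂ : G) (β₂ : Pth V E) (η₂ : ℕ → E) : Prop :=
  η₁ = η₂ ∧ ∃ δ : Pth V E, Γ.IsPath δ ∧ Γ.InCyl δ η₁ ∧
    sgeMul S (some (α₁, g₁, β₁)) (some (δ, 1, δ)) =
      sgeMul S (some (α₂, g₂, β₂)) (some (δ, 1, δ))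

/-- The partial isometry `s_α` associated to a finite path. -/
def sPath {A : Type*} [Monoid A] (pv : V → A) (se : E → A) : Pth V E → A :=
  fun x =>
    match x with
    | (v, []) => pv v
    | (_, es) => (es.map se).prod

end SSGraph

end

/-!
The idempotents of `S_{G,E}` are exactly the triples `(δ, 1, δ)`. Suppose
`(α, g, β) (δ, 1, δ) = (δ, 1, δ)`. In the main case `δ = βε` and the product is
`(α (g·ε), φ(g, ε), δ)`; since `g·ε` has the length of `ε`, this forces `α = β`, `g·ε = ε`
and `φ(g, ε) = 1`, and pseudo-freeness, propagated along `ε` one edge at a time by the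
cocycle identity, gives `g = 1`. Conversely, if `g·e = e` and `φ(g, e) = 1`, then
`(r(e), g, r(e))` dominates the idempotent `(e, 1, e)`, and it is idempotent only if `g = 1`.
-/

namespace SSGraph

variable {V E G : Type*}

def IsPrefix (p q : Pth V E) : Prop := p.1 = q.1 ∧ p.2 <+: q.2

def tailAfter (Γ : SSGraph V E) (β γ : Pth V E) : Pth V E := (Γ.src β, γ.2.drop β.2.length)

section Paths

variable {Γ : SSGraph V E}

lemma isPath_nil (v : V) : Γ.IsPath ((v, []) : Pth V E) :=
  ⟨by simp, List.isChain_nil⟩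

lemma isPath_ofEdge (e : E) : Γ.IsPath (Γ.ofEdge e) :=
  ⟨by simp [ofEdge], List.isChain_singleton e⟩

lemma comp_eq_self_iff {p q : Pth V E} : comp p q = p ↔ q.2 = [] := by
  simp [comp, Prod.ext_iff]

lemma comp_inj' {p q p' q' : Pth V E} (h : comp p q = comp p' q')
    (hlen : q.2.length = q'.2.length) : p = p' ∧ q.2 = q'.2 := by
  obtain ⟨h1, h2⟩ := Prod.ext_iff.mp h
  obtain ⟨hp, hq⟩ := List.append_inj' h2 hlen
  exact ⟨Prod.ext h1 hp, hq⟩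

lemma tailAfter_self (β : Pth V E) : Γ.tailAfter β β = ofVertex (Γ.src β) := by
  simp [tailAfter, ofVertex]

lemma IsPrefix.comp_tailAfter {β γ : Pth V E} (h : IsPrefix β γ) :
    comp β (Γ.tailAfter β γ) = γ :=
  Prod.ext h.1 (List.prefix_iff_eq_append.mp h.2)

lemma IsPrefix.eq_of_tailAfter_eq_nil {β γ : Pth V E} (h : IsPrefix β γ)
    (hε : (Γ.tailAfter β γ).2 = []) : β = γ := by
  rw [← h.comp_tailAfter, comp_eq_self_iff.mpr hε]

lemma IsPrefix.isPath_tailAfter {β γ : Pth V E} (h : IsPrefix β γ) (hγ : Γ.IsPath γ) :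
    Γ.IsPath (Γ.tailAfter β γ) := by
  obtain ⟨t, ht⟩ := h.2
  have hdrop : γ.2.drop β.2.length = t := by rw [← ht, List.drop_left]
  have hchain : List.IsChain (fun a b => Γ.d a = Γ.r b) (β.2 ++ t) := ht ▸ hγ.2
  rw [List.isChain_append] at hchain
  unfold tailAfter
  rw [hdrop]
  refine ⟨?_, hchain.2.1⟩
  unfold src
  cases hlast : β.2.getLast? with
  | none =>
    rw [List.getLast?_eq_none_iff.mp hlast, List.nil_append] at ht
    exact fun e he => h.1 ▸ hγ.1 e (ht ▸ he)
  | some a => exact fun e he => (hchain.2.2 a hlast e he).symm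

end Paths

namespace PathSystem

variable [Group G] {Γ : SSGraph V E} {GA : GraphAction G Γ} {c : EdgeCocycle GA}
  (S : PathSystem c)

lemma coc_one {p : Pth V E} (hp : Γ.IsPath p) : S.coc 1 p = 1 := by
  have h := S.coc_mul 1 1 p hp
  rw [one_mul, S.act_one p hp] at h
  exact mul_eq_right.mp h.symm

lemma act_eq_nil_iff {g : G} {p : Pth V E} (hp : Γ.IsPath p) :
    (S.act g p).2 = [] ↔ p.2 = [] := by
  rw [← List.length_eq_zero_iff, S.length_act g p hp, List.length_eq_zero_iff]

end PathSystem

section Semigroup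

variable [Group G] {Γ : SSGraph V E} {GA : GraphAction G Γ} {c : EdgeCocycle GA}
  (S : PathSystem c)

theorem PseudoFree.eq_one_of_fixes_path (hpf : PseudoFree GA c) {g : G} {p : Pth V E}
    (hp : Γ.IsPath p) (hact : (S.act g p).2 = p.2) (hcoc : S.coc g p = 1) : g = 1 := by
  obtain ⟨v, l⟩ := p
  induction l generalizing v g with
  | nil => rwa [show ((v, []) : Pth V E) = ofVertex v from rfl, S.coc_vertex] at hcoc
  | cons e t ih =>
    have hchain : List.IsChain (fun a b => Γ.d a = Γ.r b) (e :: t) := hp.2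
    rw [List.isChain_cons] at hchain
    have hrest : Γ.IsPath ((Γ.d e, t) : Pth V E) :=
      ⟨fun e' he' => (hchain.1 e' he').symm, hchain.2⟩
    have hsplit : ((v, e :: t) : Pth V E) = comp (Γ.ofEdge e) (Γ.d e, t) := by
      simp [comp, ofEdge, hp.1 e rfl]
    rw [hsplit, S.act_comp g _ _ (isPath_ofEdge e) hrest rfl, S.act_edge, S.coc_edge] at hact
    rw [hsplit, S.coc_comp g _ _ (isPath_ofEdge e) hrest rfl, S.coc_edge] at hcoc
    obtain ⟨hfix, hact_rest⟩ := List.cons_eq_cons.mp hact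
    exact hpf g e hfix (ih (Γ.d e) hrest hact_rest hcoc)

lemma sgeMulAux_of_isPrefix {α β γ δ : Pth V E} {g h : G} (hβγ : IsPrefix β γ) :
    sgeMulAux S (α, g, β) (γ, h, δ) =
      some (comp α (S.act g (Γ.tailAfter β γ)), S.coc g (Γ.tailAfter β γ) * h, δ) :=
  if_pos hβγ

lemma sgeMulAux_eq_some {α β γ δ : Pth V E} {g h : G} {z : Pth V E × G × Pth V E}
    (hz : sgeMulAux S (α, g, β) (γ, h, δ) = some z) :
    (IsPrefix β γ ∧
      z = (comp α (S.act g (Γ.tailAfter β γ)), S.coc g (Γ.tailAfter β γ) * h, δ)) ∨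
    (IsPrefix γ β ∧
      z = (α, g * (S.coc h⁻¹ (Γ.tailAfter γ β))⁻¹, comp δ (S.act h⁻¹ (Γ.tailAfter γ β)))) := by
  unfold sgeMulAux at hz
  split_ifs at hz with hβγ hγβ
  · exact Or.inl ⟨hβγ, (Option.some.inj hz).symm⟩
  · exact Or.inr ⟨hγβ, (Option.some.inj hz).symm⟩

lemma sgeMulAux_self_eq_self_iff {a b : Pth V E} {h : G} (ha : Γ.IsPath a) (hb : Γ.IsPath b) :
    sgeMulAux S (a, h, b) (a, h, b) = some (a, h, b) ↔ a = b ∧ h = 1 := by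
  constructor
  · intro hidem
    rcases sgeMulAux_eq_some S hidem with ⟨hba, hz⟩ | ⟨hab, hz⟩
    · simp only [Prod.mk.injEq] at hz
      obtain ⟨hfst, hmid, -⟩ := hz
      have hε := (S.act_eq_nil_iff (hba.isPath_tailAfter ha)).mp
        (comp_eq_self_iff.mp hfst.symm)
      obtain rfl := (hba.eq_of_tailAfter_eq_nil hε).symm
      rw [tailAfter_self, S.coc_vertex] at hmid
      exact ⟨rfl, mul_eq_right.mp hmid.symm⟩
    · simp only [Prod.mk.injEq] at hz
      obtain ⟨-, hmid, hlst⟩ := hz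
      have hε := (S.act_eq_nil_iff (hab.isPath_tailAfter hb)).mp
        (comp_eq_self_iff.mp hlst.symm)
      obtain rfl := hab.eq_of_tailAfter_eq_nil hε
      rw [tailAfter_self, S.coc_vertex, inv_inv] at hmid
      exact ⟨rfl, mul_eq_right.mp hmid.symm⟩
  · rintro ⟨rfl, rfl⟩
    rw [sgeMulAux_of_isPrefix S ⟨rfl, List.prefix_rfl⟩, tailAfter_self, S.act_vertex,
      S.coc_vertex, GA.actV_one]
    simp [comp, ofVertex]

theorem PseudoFree.eq_and_eq_one_of_sgeMulAux_eq_idem (hpf : PseudoFree GA c)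
    {α β δ : Pth V E} {g : G} (hβ : Γ.IsPath β) (hδ : Γ.IsPath δ)
    (hdom : sgeMulAux S (α, g, β) (δ, 1, δ) = some (δ, 1, δ)) : α = β ∧ g = 1 := by
  rcases sgeMulAux_eq_some S hdom with ⟨hβδ, hz⟩ | ⟨hδβ, hz⟩
  · simp only [Prod.mk.injEq, mul_one] at hz
    obtain ⟨hfst, hmid, -⟩ := hz
    have hε := hβδ.isPath_tailAfter hδ
    obtain ⟨rfl, hfix⟩ := comp_inj' (hfst.symm.trans hβδ.comp_tailAfter.symm)
      (S.length_act g _ hε)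
    exact ⟨rfl, hpf.eq_one_of_fixes_path S hε hfix hmid.symm⟩
  · have hε := hδβ.isPath_tailAfter hβ
    rw [inv_one, S.coc_one hε, S.act_one _ hε, inv_one, mul_one] at hz
    simp only [Prod.mk.injEq] at hz
    obtain ⟨rfl, rfl, hlst⟩ := hz
    exact ⟨hδβ.eq_of_tailAfter_eq_nil (comp_eq_self_iff.mp hlst.symm), rfl⟩

lemma sgeMulAux_vertex_ofEdge {g : G} {e : E} (hfix : GA.actE g e = e) (hφ : c.φ g e = 1) :
    sgeMulAux S ((Γ.r e, []), g, (Γ.r e, [])) (Γ.ofEdge e, 1, Γ.ofEdge e) =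
      some (Γ.ofEdge e, 1, Γ.ofEdge e) := by
  rw [sgeMulAux_of_isPrefix S (β := (Γ.r e, [])) (γ := Γ.ofEdge e) ⟨rfl, List.nil_prefix⟩,
    show Γ.tailAfter (Γ.r e, []) (Γ.ofEdge e) = Γ.ofEdge e from rfl,
    S.act_edge, S.coc_edge, hfix, hφ, mul_one]
  rfl

end Semigroup

end SSGraph

open SSGraph in
theorem pseudoFree_iff_eStarUnitary_general {V E G : Type*} [Group G]
    (Γ : SSGraph V E)
    (GA : SSGraph.GraphAction G Γ) (c : SSGraph.EdgeCocycle GA)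
    (S : PathSystem c) :
    PseudoFree GA c ↔
      ∀ s ∈ sgeSet Γ GA, ∀ f ∈ sgeSet Γ GA, f ≠ none →
        sgeMul S f f = f → sgeMul S s f = f → sgeMul S s s = s := by
  constructor
  · intro hpf s hs f hf hfne hff hsf
    rcases hf with rfl | ⟨⟨δ, h, δ'⟩, rfl, hδ, hδ', -⟩
    · exact absurd rfl hfne
    rcases hs with rfl | ⟨⟨α, g, β⟩, rfl, -, hβ, -⟩
    · exact absurd hsf.symm hfne
    obtain ⟨rfl, rfl⟩ : δ = δ' ∧ h = 1 := (sgeMulAux_self_eq_self_iff S hδ hδ').mp hff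
    obtain ⟨rfl, rfl⟩ : α = β ∧ g = 1 := hpf.eq_and_eq_one_of_sgeMulAux_eq_idem S hβ hδ hsf
    exact (sgeMulAux_self_eq_self_iff S hβ hβ).mpr ⟨rfl, rfl⟩
  · intro hunitary g e hfix hφ
    have hv : Γ.r e = GA.actV g (Γ.r e) := by rw [← GA.r_act, hfix]
    have hvertex := isPath_nil (Γ := Γ) (Γ.r e)
    have hedge := isPath_ofEdge (Γ := Γ) e
    have hss := hunitary _ (Or.inr ⟨((Γ.r e, []), g, (Γ.r e, [])), rfl, hvertex, hvertex, hv⟩)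
      _ (Or.inr ⟨(Γ.ofEdge e, 1, Γ.ofEdge e), rfl, hedge, hedge, (GA.actV_one _).symm⟩)
      (Option.some_ne_none _) ((sgeMulAux_self_eq_self_iff S hedge hedge).mpr ⟨rfl, rfl⟩)
      (sgeMulAux_vertex_ofEdge S hfix hφ)
    exact ((sgeMulAux_self_eq_self_iff S hvertex hvertex).mp hss).2

open SSGraph in
theorem pseudoFree_iff_eStarUnitary {V E G : Type*} [Group G] [Countable G] [Fintype V] [Fintype E]
    (Γ : SSGraph V E) (hns : ∀ v : V, ∃ e, Γ.r e = v)
    (GA : SSGraph.GraphAction G Γ) (c : SSGraph.EdgeCocycle GA)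
    (S : PathSystem c) :
    PseudoFree GA c ↔
      ∀ s ∈ sgeSet Γ GA, ∀ f ∈ sgeSet Γ GA, f ≠ none →
        sgeMul S f f = f → sgeMul S s f = f → sgeMul S s s = s :=
  pseudoFree_iff_eStarUnitary_general Γ GA c S
end

section
/- Assume (G,E,φ) is pseudo-free. If [α₁,g₁,β₁; β₁ξ₁] = [α₂,g₂,β₂; β₂ξ₂] as germs, then ρ^{|α₁|}(Φ(g₁,ξ₁)) and ρ^{|α₂|}(Φ(g₂,ξ₂)) are congruent modulo the subgroup G^{(∞)} of eventually trivial sequences, and |α₁| − |β₁| = |α₂| − |β₂|; consequently the lag map ℓ([α,g,β; βξ]) = (ρ̌^{|α|}(Φ̌(g,ξ)), |α|−|β|) is a well-defined groupoid homomorphism from the tight groupoid of S_{G,E} to the semidirect product Ǧ ⋊_{ρ̌} ℤ. -/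
/-! Restricting a germ `[α, g, β; βξ]` to a longer prefix `β (ξ|k)` of `βξ` replaces it by
`[α (g ξ|k), φ(g, ξ|k), β (ξ|k); σᵏξ]`. By the cocycle identity
`φ(g, ξ|(k+j)) = φ(φ(g, ξ|k), (σᵏξ)|j)` this shifts `Φ(g, ξ)` by `k`, which is compensated by
the `k` extra edges in the range path. Two representatives of one germ agree after restriction
to a common prefix, so their lags agree in the corona. Multiplicativity is the cocycle identity
`φ(gh, x) = φ(g, h x) φ(h, x)`, applied entrywise. -/

open Filter

section Corona

variable {G : Type*} [Group G]

lemma rshift_iterate_apply (a : ℕ) (f : ℕ → G) (n : ℕ) :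
    (⇑(rshift G))^[a] f n = if n < a then 1 else f (n - a) := by
  induction a generalizing n with
  | zero => simp
  | succ a ih =>
    rw [Function.iterate_succ_apply']
    show (if n = 0 then 1 else ((⇑(rshift G))^[a] f) (n - 1)) = _
    rw [ih]
    split_ifs <;> first | rfl | omega | (congr 1; omega)

lemma lshift_leftInverse_rshift : Function.LeftInverse (lshift G) (rshift G) := fun f => by
  funext n
  simp [lshift, rshift]

lemma mk'_eq_mk'_iff_eventuallyEq {x y : ℕ → G} :
    QuotientGroup.mk' (eventuallyTrivial G) x = QuotientGroup.mk' (eventuallyTrivial G) y ↔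
      x =ᶠ[atTop] y := by
  rw [QuotientGroup.mk'_apply, QuotientGroup.mk'_apply, QuotientGroup.eq]
  simp [eventuallyTrivial, EventuallyEq, eventually_atTop, inv_mul_eq_one]

lemma mk'_rshift_iterate_eq_of_shift {f₁ f₂ : ℕ → G} {a₁ a₂ k₁ k₂ : ℕ}
    (hlen : a₁ + k₁ = a₂ + k₂) (h : ∀ j, f₁ (k₁ + j) = f₂ (k₂ + j)) :
    QuotientGroup.mk' (eventuallyTrivial G) ((⇑(rshift G))^[a₁] f₁) =
      QuotientGroup.mk' (eventuallyTrivial G) ((⇑(rshift G))^[a₂] f₂) := by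
  refine mk'_eq_mk'_iff_eventuallyEq.2 (eventually_atTop.2 ⟨a₁ + k₁, fun n hn => ?_⟩)
  rw [rshift_iterate_apply, rshift_iterate_apply, if_neg (by omega), if_neg (by omega)]
  convert h (n - a₁ - k₁) using 2 <;> omega

lemma coronaRho_iterate_mk' (k : ℕ) (f : ℕ → G) :
    (⇑(coronaRho G))^[k] (QuotientGroup.mk' (eventuallyTrivial G) f) =
      QuotientGroup.mk' (eventuallyTrivial G) ((⇑(rshift G))^[k] f) :=
  (Function.Semiconj.iterate_right (f := QuotientGroup.mk' (eventuallyTrivial G))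
    (ga := rshift G) (gb := coronaRho G) (fun _ => rfl) k f).symm

lemma coronaLam_iterate_mk' (k : ℕ) (f : ℕ → G) :
    (⇑(coronaLam G))^[k] (QuotientGroup.mk' (eventuallyTrivial G) f) =
      QuotientGroup.mk' (eventuallyTrivial G) ((⇑(lshift G))^[k] f) :=
  (Function.Semiconj.iterate_right (f := QuotientGroup.mk' (eventuallyTrivial G))
    (ga := lshift G) (gb := coronaLam G) (fun _ => rfl) k f).symm

lemma coronaRhoZ_sub_mk' (m n : ℕ) (f : ℕ → G) :
    coronaRhoZ G ((m : ℤ) - n)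
        (QuotientGroup.mk' (eventuallyTrivial G) ((⇑(rshift G))^[n] f)) =
      QuotientGroup.mk' (eventuallyTrivial G) ((⇑(rshift G))^[m] f) := by
  rcases le_or_gt n m with h | h
  · obtain ⟨k, rfl⟩ := Nat.exists_eq_add_of_le h
    rw [show ((n + k : ℕ) : ℤ) - n = k by omega]
    show (⇑(coronaRho G))^[k] _ = _
    rw [coronaRho_iterate_mk', ← Function.iterate_add_apply, add_comm]
  · obtain ⟨k, rfl⟩ := Nat.exists_eq_add_of_lt h
    rw [show (m : ℤ) - ((m + k + 1 : ℕ) : ℤ) = Int.negSucc k by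
      rw [Int.negSucc_eq]; push_cast; ring]
    show (⇑(coronaLam G))^[k + 1] _ = _
    rw [coronaLam_iterate_mk', show m + k + 1 = k + 1 + m by omega,
      Function.iterate_add_apply (rshift G),
      lshift_leftInverse_rshift.iterate (k + 1)]

end Corona

namespace SSGraph

variable {V E G : Type*} [Group G] {Γ : SSGraph V E}

lemma trunc_length (ξ : ℕ → E) (n : ℕ) : (Γ.trunc ξ n).2.length = n := by
  simp [trunc]

lemma trunc_zero (ξ : ℕ → E) : Γ.trunc ξ 0 = ofVertex (Γ.r (ξ 0)) := rfl

lemma comp_ofVertex (p : Pth V E) (v : V) : comp p (ofVertex v) = p := by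
  simp [comp, ofVertex]

lemma trunc_add (ξ : ℕ → E) (m k : ℕ) :
    Γ.trunc ξ (m + k) = comp (Γ.trunc ξ m) (Γ.trunc (fun i => ξ (m + i)) k) := by
  simp [trunc, comp, List.range_add, List.map_map, Function.comp_def]

lemma InfPath.shift {ξ : ℕ → E} (hξ : Γ.InfPath ξ) (m : ℕ) : Γ.InfPath (fun i => ξ (m + i)) :=
  fun n => hξ (m + n)

lemma isPath_trunc {ξ : ℕ → E} (hξ : Γ.InfPath ξ) (n : ℕ) : Γ.IsPath (Γ.trunc ξ n) := by
  refine ⟨fun e he => ?_, (List.isChain_map ξ).2 ((List.isChain_range _ n).2 fun m _ => hξ m)⟩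
  cases n <;> simp_all [trunc, List.head?_range]

lemma src_trunc {ξ : ℕ → E} (hξ : Γ.InfPath ξ) (m : ℕ) : Γ.src (Γ.trunc ξ m) = Γ.r (ξ m) := by
  cases m with
  | zero => rfl
  | succ m => simpa [src, trunc, List.range_succ] using hξ m

lemma prefix_trunc_add (ξ : ℕ → E) (m k : ℕ) : (Γ.trunc ξ m).2 <+: (Γ.trunc ξ (m + k)).2 := by
  rw [trunc_add]
  exact List.prefix_append _ _

lemma suffix_trunc_add {ξ : ℕ → E} (hξ : Γ.InfPath ξ) (m k : ℕ) :
    ((Γ.src (Γ.trunc ξ m), (Γ.trunc ξ (m + k)).2.drop (Γ.trunc ξ m).2.length) : Pth V E) =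
      Γ.trunc (fun i => ξ (m + i)) k := by
  rw [src_trunc hξ, trunc_add ξ m k]
  exact Prod.ext rfl List.drop_left

lemma trunc_of_inCyl {δ : Pth V E} {η : ℕ → E} (hδ : Γ.InCyl δ η) : Γ.trunc η δ.2.length = δ :=
  Prod.ext hδ.1 (List.ext_getElem (by simp [trunc]) fun i _ h => by simp [trunc, hδ.2 i h])

lemma compInf_of_lt (β : Pth V E) (ξ : ℕ → E) {n : ℕ} (h : n < β.2.length) :
    compInf β ξ n = β.2[n] :=
  List.getD_eq_getElem _ _ h

lemma compInf_of_le (β : Pth V E) (ξ : ℕ → E) {n : ℕ} (h : β.2.length ≤ n) :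
    compInf β ξ n = ξ (n - β.2.length) :=
  List.getD_eq_default _ _ h

lemma compInf_length_add (β : Pth V E) (ξ : ℕ → E) (i : ℕ) :
    compInf β ξ (β.2.length + i) = ξ i := by
  rw [compInf_of_le _ _ (Nat.le_add_right _ _), Nat.add_sub_cancel_left]

lemma trunc_compInf {β : Pth V E} (hβ : Γ.IsPath β) {ξ : ℕ → E} (hs : Γ.src β = Γ.r (ξ 0)) :
    Γ.trunc (compInf β ξ) β.2.length = β := by
  obtain ⟨v, l⟩ := β
  refine Prod.ext ?_ (List.ext_getElem (by simp [trunc]) fun i _ h => by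
    simp [trunc, compInf_of_lt _ _ h])
  cases l with
  | nil => simpa [trunc, compInf, src] using hs.symm
  | cons e l => simpa [trunc, compInf] using hβ.1 e rfl

lemma InfPath.compInf {β : Pth V E} (hβ : Γ.IsPath β) {ξ : ℕ → E} (hξ : Γ.InfPath ξ)
    (hs : Γ.src β = Γ.r (ξ 0)) : Γ.InfPath (compInf β ξ) := by
  intro n
  rcases lt_trichotomy (n + 1) β.2.length with h | h | h
  · rw [compInf_of_lt _ _ h, compInf_of_lt _ _ (by omega)]
    exact List.isChain_iff_getElem.1 hβ.2 n h
  · rw [compInf_of_lt _ _ (by omega), compInf_of_le _ _ h.ge,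
      show n + 1 - β.2.length = 0 by omega, ← hs]
    simp [src, List.getLast?_eq_getElem?, show β.2.length - 1 = n by omega,
      List.getElem?_eq_getElem (show n < β.2.length by omega)]
  · rw [compInf_of_le _ _ (by omega), compInf_of_le _ _ (by omega),
      show n + 1 - β.2.length = n - β.2.length + 1 by omega]
    exact hξ _

variable {GA : GraphAction G Γ} {c : EdgeCocycle GA} (S : PathSystem c)

lemma PathSystem.coc_one_s18 {p : Pth V E} (hp : Γ.IsPath p) : S.coc 1 p = 1 := by
  have h := S.coc_mul 1 1 p hp
  rw [one_mul, S.act_one p hp] at h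
  exact left_eq_mul.mp h

lemma Phi_add {ξ : ℕ → E} (hξ : Γ.InfPath ξ) (g : G) (k j : ℕ) :
    Phi S g ξ (k + j) = Phi S (S.coc g (Γ.trunc ξ k)) (fun i => ξ (k + i)) j := by
  rw [Phi, trunc_add, S.coc_comp _ _ _ (isPath_trunc hξ k) (isPath_trunc (hξ.shift k) j)
    (src_trunc hξ k)]
  rfl

lemma Phi_mul (IA : InfAction S) {ξ : ℕ → E} (hξ : Γ.InfPath ξ) (g h : G) :
    Phi S (g * h) ξ = Phi S g (IA.a h ξ) * Phi S h ξ := by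
  funext n
  simp only [Phi, Pi.mul_apply, IA.trunc_a h ξ n hξ]
  exact S.coc_mul g h _ (isPath_trunc hξ n)

lemma mk'_rshift_iterate_Phi_eq {g₁ g₂ : G} {ξ₁ ξ₂ : ℕ → E} (hξ₁ : Γ.InfPath ξ₁)
    (hξ₂ : Γ.InfPath ξ₂) {a₁ a₂ k₁ k₂ : ℕ} (hlen : a₁ + k₁ = a₂ + k₂)
    (htail : ∀ j, ξ₁ (k₁ + j) = ξ₂ (k₂ + j))
    (hcoc : S.coc g₁ (Γ.trunc ξ₁ k₁) = S.coc g₂ (Γ.trunc ξ₂ k₂)) :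
    QuotientGroup.mk' (eventuallyTrivial G) ((⇑(rshift G))^[a₁] (Phi S g₁ ξ₁)) =
      QuotientGroup.mk' (eventuallyTrivial G) ((⇑(rshift G))^[a₂] (Phi S g₂ ξ₂)) :=
  mk'_rshift_iterate_eq_of_shift hlen fun j => by
    rw [Phi_add S hξ₁, Phi_add S hξ₂, hcoc, funext htail]

/-- For `n < m` the truncated difference `n - m` is `0`, and the right-hand side is
`(α, g, trunc η m)` itself. -/
lemma sgeMul_trunc_diag {η : ℕ → E} (hη : Γ.InfPath η) (α : Pth V E) (g : G) (m n : ℕ) :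
    sgeMul S (some (α, g, Γ.trunc η m)) (some (Γ.trunc η n, 1, Γ.trunc η n)) =
      some (comp α (S.act g (Γ.trunc (fun i => η (m + i)) (n - m))),
        S.coc g (Γ.trunc (fun i => η (m + i)) (n - m)), Γ.trunc η (max m n)) := by
  simp only [sgeMul, sgeMulAux]
  rcases le_or_gt m n with h | h
  · obtain ⟨k, rfl⟩ := Nat.exists_eq_add_of_le h
    rw [if_pos ⟨rfl, prefix_trunc_add η m k⟩, suffix_trunc_add hη, Nat.add_sub_cancel_left,
      max_eq_right h, mul_one]
  · obtain ⟨k, rfl⟩ := Nat.exists_eq_add_of_le h.le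
    have hnot : ¬((Γ.trunc η (n + k)).1 = (Γ.trunc η n).1 ∧
        (Γ.trunc η (n + k)).2 <+: (Γ.trunc η n).2) := fun ⟨_, hp⟩ => by
      have := hp.length_le
      simp only [trunc_length] at this
      omega
    have hpath := isPath_trunc (hη.shift n) k
    rw [if_neg hnot, if_pos ⟨rfl, prefix_trunc_add η n k⟩, suffix_trunc_add hη,
      Nat.sub_eq_zero_of_le h.le, max_eq_left h.le, trunc_zero, S.act_vertex, S.coc_vertex,
      comp_ofVertex, inv_one, S.coc_one_s18 hpath, S.act_one _ hpath, inv_one, mul_one, ← trunc_add]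

lemma sgeMul_diag_of_inCyl {α β δ : Pth V E} {g : G} {ξ : ℕ → E} (hβ : Γ.IsPath β)
    (hξ : Γ.InfPath ξ) (hs : Γ.src β = Γ.r (ξ 0)) (hδ : Γ.InCyl δ (compInf β ξ)) :
    sgeMul S (some (α, g, β)) (some (δ, 1, δ)) =
      some (comp α (S.act g (Γ.trunc ξ (δ.2.length - β.2.length))),
        S.coc g (Γ.trunc ξ (δ.2.length - β.2.length)),
        Γ.trunc (compInf β ξ) (max β.2.length δ.2.length)) := by
  have h := sgeMul_trunc_diag S (hξ.compInf hβ hs) α g β.2.length δ.2.length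
  rwa [trunc_compInf hβ hs, trunc_of_inCyl hδ, funext (compInf_length_add β ξ)] at h

end SSGraph

open SSGraph in
theorem lag_well_defined_and_multiplicative_general {V E G : Type*} [Group G]
    (Γ : SSGraph V E)
    (GA : SSGraph.GraphAction G Γ) (c : SSGraph.EdgeCocycle GA)
    (S : PathSystem c) (IA : InfAction S) :
    (∀ (α₁ : Pth V E) (g₁ : G) (β₁ : Pth V E) (ξ₁ : ℕ → E)
       (α₂ : Pth V E) (g₂ : G) (β₂ : Pth V E) (ξ₂ : ℕ → E),
      SgeCond Γ GA (α₁, g₁, β₁) → SgeCond Γ GA (α₂, g₂, β₂) →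
      Γ.InfPath ξ₁ → Γ.InfPath ξ₂ →
      Γ.src β₁ = Γ.r (ξ₁ 0) → Γ.src β₂ = Γ.r (ξ₂ 0) →
      germEqv S α₁ g₁ β₁ (compInf β₁ ξ₁) α₂ g₂ β₂ (compInf β₂ ξ₂) →
        QuotientGroup.mk' (eventuallyTrivial G)
            ((⇑(rshift G))^[α₁.2.length] (Phi S g₁ ξ₁)) =
          QuotientGroup.mk' (eventuallyTrivial G)
            ((⇑(rshift G))^[α₂.2.length] (Phi S g₂ ξ₂)) ∧
        (α₁.2.length : ℤ) - β₁.2.length = (α₂.2.length : ℤ) - β₂.2.length) ∧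
    (∀ (α₁ : Pth V E) (g₁ : G) (α₂ : Pth V E) (g₂ : G) (β : Pth V E) (ξ : ℕ → E),
      SgeCond Γ GA (α₁, g₁, α₂) → SgeCond Γ GA (α₂, g₂, β) →
      Γ.InfPath ξ → Γ.src β = Γ.r (ξ 0) →
        QuotientGroup.mk' (eventuallyTrivial G)
            ((⇑(rshift G))^[α₁.2.length] (Phi S (g₁ * g₂) ξ)) =
          QuotientGroup.mk' (eventuallyTrivial G)
              ((⇑(rshift G))^[α₁.2.length] (Phi S g₁ (IA.a g₂ ξ))) *
            coronaRhoZ G ((α₁.2.length : ℤ) - α₂.2.length)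
              (QuotientGroup.mk' (eventuallyTrivial G)
                ((⇑(rshift G))^[α₂.2.length] (Phi S g₂ ξ))) ∧
        ((α₁.2.length : ℤ) - β.2.length) =
          ((α₁.2.length : ℤ) - α₂.2.length) + ((α₂.2.length : ℤ) - β.2.length)) := by
  constructor
  · rintro α₁ g₁ β₁ ξ₁ α₂ g₂ β₂ ξ₂ ⟨-, hβ₁, -⟩ ⟨-, hβ₂, -⟩ hξ₁ hξ₂ hs₁ hs₂ ⟨hη, δ, -, hδ, heq⟩
    rw [sgeMul_diag_of_inCyl S hβ₁ hξ₁ hs₁ hδ, sgeMul_diag_of_inCyl S hβ₂ hξ₂ hs₂ (hη ▸ hδ),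
      hη] at heq
    simp only [Option.some.injEq, Prod.mk.injEq] at heq
    obtain ⟨hα, hcoc, htrunc⟩ := heq
    have hαlen := congrArg (·.2.length) hα
    have hmaxlen := congrArg (·.2.length) htrunc
    simp only [comp, List.length_append, S.length_act _ _ (isPath_trunc hξ₁ _),
      S.length_act _ _ (isPath_trunc hξ₂ _), trunc_length] at hαlen hmaxlen
    refine ⟨mk'_rshift_iterate_Phi_eq S hξ₁ hξ₂ (by omega) (fun j => ?_) hcoc, by omega⟩
    rw [← compInf_length_add β₁ ξ₁, ← compInf_length_add β₂ ξ₂, hη, ← add_assoc, ← add_assoc]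
    congr 1
    omega
  · rintro α₁ g₁ α₂ g₂ β ξ - - hξ -
    refine ⟨?_, by ring⟩
    rw [Phi_mul S IA hξ, iterate_map_mul, map_mul, coronaRhoZ_sub_mk']

open SSGraph in
theorem lag_well_defined_and_multiplicative {V E G : Type*} [Group G] [Countable G] [Fintype V] [Fintype E]
    (Γ : SSGraph V E) (hns : ∀ v : V, ∃ e, Γ.r e = v)
    (GA : SSGraph.GraphAction G Γ) (c : SSGraph.EdgeCocycle GA)
    (S : PathSystem c) (hpf : PseudoFree GA c) (IA : InfAction S) :
    (∀ (α₁ : Pth V E) (g₁ : G) (β₁ : Pth V E) (ξ₁ : ℕ → E)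
       (α₂ : Pth V E) (g₂ : G) (β₂ : Pth V E) (ξ₂ : ℕ → E),
      SgeCond Γ GA (α₁, g₁, β₁) → SgeCond Γ GA (α₂, g₂, β₂) →
      Γ.InfPath ξ₁ → Γ.InfPath ξ₂ →
      Γ.src β₁ = Γ.r (ξ₁ 0) → Γ.src β₂ = Γ.r (ξ₂ 0) →
      germEqv S α₁ g₁ β₁ (compInf β₁ ξ₁) α₂ g₂ β₂ (compInf β₂ ξ₂) →
        QuotientGroup.mk' (eventuallyTrivial G)
            ((⇑(rshift G))^[α₁.2.length] (Phi S g₁ ξ₁)) =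
          QuotientGroup.mk' (eventuallyTrivial G)
            ((⇑(rshift G))^[α₂.2.length] (Phi S g₂ ξ₂)) ∧
        (α₁.2.length : ℤ) - β₁.2.length = (α₂.2.length : ℤ) - β₂.2.length) ∧
    (∀ (α₁ : Pth V E) (g₁ : G) (α₂ : Pth V E) (g₂ : G) (β : Pth V E) (ξ : ℕ → E),
      SgeCond Γ GA (α₁, g₁, α₂) → SgeCond Γ GA (α₂, g₂, β) →
      Γ.InfPath ξ → Γ.src β = Γ.r (ξ 0) →
        QuotientGroup.mk' (eventuallyTrivial G)
            ((⇑(rshift G))^[α₁.2.length] (Phi S (g₁ * g₂) ξ)) =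
          QuotientGroup.mk' (eventuallyTrivial G)
              ((⇑(rshift G))^[α₁.2.length] (Phi S g₁ (IA.a g₂ ξ))) *
            coronaRhoZ G ((α₁.2.length : ℤ) - α₂.2.length)
              (QuotientGroup.mk' (eventuallyTrivial G)
                ((⇑(rshift G))^[α₂.2.length] (Phi S g₂ ξ))) ∧
        ((α₁.2.length : ℤ) - β.2.length) =
          ((α₁.2.length : ℤ) - α₂.2.length) + ((α₂.2.length : ℤ) - β.2.length)) :=
  lag_well_defined_and_multiplicative_general Γ GA c S IA
end
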